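/- arXiv:2512.23753 — 2 statements merged into one kernel-verified Lean document; each statement's English description precedes it below -/
import Mathlib

section
/- For the Type-II ML evidential loss with exponential activation (e_k = exp o_k), the gradient with respect to the ground-truth logit is (1/S − 1/α_gt)(α_gt − 1), which lies in [−1, 0]; for a non-ground-truth logit the gradient (α_k − 1)/S lies in [0, 1]. -/
/-- For the Type-II ML evidential loss with exponential activation
(`α k = exp (o k) + 1`, `S = ∑ j, α j`), the gradient at the ground-truth
logit, `(1/S - 1/α_gt) * (α_gt - 1)`, lies in `[-1, 0]`, and the gradient at
any other logit, `(α k - 1)/S`, lies in `[0, 1]`. -/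
theorem typeII_exp_gradient_bounds {K : ℕ} (hK : 1 ≤ K)
    (o : Fin K → ℝ) (gt : Fin K) :
    ((1 / (∑ j, (Real.exp (o j) + 1)) - 1 / (Real.exp (o gt) + 1)) *
          ((Real.exp (o gt) + 1) - 1) ∈ Set.Icc (-1 : ℝ) 0) ∧
      ∀ k : Fin K, k ≠ gt →
        ((Real.exp (o k) + 1) - 1) / (∑ j, (Real.exp (o j) + 1)) ∈
          Set.Icc (0 : ℝ) 1 := by
  set S : ℝ := ∑ j, (Real.exp (o j) + 1) with hS
  have hα : ∀ k : Fin K, (1 : ℝ) ≤ Real.exp (o k) + 1 := fun k => by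
    have := Real.exp_pos (o k); linarith
  have hle : ∀ k : Fin K, Real.exp (o k) + 1 ≤ S := fun k => by
    apply Finset.single_le_sum (f := fun j => Real.exp (o j) + 1)
      (fun j _ => by positivity) (Finset.mem_univ k)
  have hSpos : (0 : ℝ) < S := lt_of_lt_of_le one_pos ((hα gt).trans (hle gt))
  constructor
  · have hαpos : (0 : ℝ) < Real.exp (o gt) + 1 := lt_of_lt_of_le one_pos (hα gt)
    have h1 : 1 / S ≤ 1 / (Real.exp (o gt) + 1) :=
      one_div_le_one_div_of_le hαpos (hle gt)
    constructor
    · have key : (1 / (Real.exp (o gt) + 1) - 1 / S) * ((Real.exp (o gt) + 1) - 1)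
          ≤ (1 / (Real.exp (o gt) + 1)) * ((Real.exp (o gt) + 1) - 1) := by
        apply mul_le_mul_of_nonneg_right _ (by linarith [hα gt])
        have : 0 < 1 / S := by positivity
        linarith
      have h2 : (1 / (Real.exp (o gt) + 1)) * ((Real.exp (o gt) + 1) - 1) ≤ 1 := by
        rw [div_mul_eq_mul_div, one_mul, div_le_one hαpos]; linarith
      nlinarith
    · apply mul_nonpos_of_nonpos_of_nonneg (by linarith) (by linarith [hα gt])
  · intro k _
    constructor
    · apply div_nonneg (by linarith [hα k]) hSpos.le
    · rw [div_le_one hSpos]; linarith [hle k]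
end

section
/- In the high-evidence limit of the exponential-activation evidential model, as all e_k → ∞ proportionally to exp(o_k), the gradient (1/S − y_k/α_k)(α_k − 1) converges to sm_k(o) − y_k, the standard softmax cross-entropy gradient. Precisely: for fixed logits o and scale t → ∞ with α_k = t·exp(o_k) + 1, the gradient tends to exp(o_k)/∑_j exp(o_j) − y_k. -/
/-!
Since `α_k - 1 = t exp (o_k)` and `S = t ∑ exp (o_j) + K`, the gradient equals
`t exp (o_k) / (t ∑ exp (o_j) + K) - y_k * (t exp (o_k) / (t exp (o_k) + 1))`.
Each quotient `t a / (t b + c)` tends to the ratio of leading coefficients `a / b`,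
giving `sm_k(o) - y_k`.
-/

open Filter Topology

theorem tendsto_mul_div_mul_add_atTop (a c : ℝ) {b : ℝ} (hb : b ≠ 0) :
    Tendsto (fun t : ℝ => t * a / (t * b + c)) atTop (𝓝 (a / b)) := by
  have hlim : Tendsto (fun t : ℝ => a / (b + c * t⁻¹)) atTop (𝓝 (a / (b + c * 0))) :=
    tendsto_const_nhds.div (tendsto_const_nhds.add (tendsto_inv_atTop_zero.const_mul c))
      (by simpa using hb)
  rw [mul_zero, add_zero] at hlim
  refine hlim.congr' ?_
  filter_upwards [eventually_ne_atTop 0] with t ht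
  rw [show b + c * t⁻¹ = (t * b + c) / t by field_simp, div_div_eq_mul_div, mul_comm]

theorem typeII_exp_gradient_high_evidence_limit_general {K : ℕ}
    (o y : Fin K → ℝ)
    (k : Fin K) :
    Filter.Tendsto
      (fun t : ℝ =>
        (1 / (∑ j, (t * Real.exp (o j) + 1)) -
            y k / (t * Real.exp (o k) + 1)) * ((t * Real.exp (o k) + 1) - 1))
      Filter.atTop
      (nhds (Real.exp (o k) / (∑ j, Real.exp (o j)) - y k)) := by
  have hsum_pos : 0 < ∑ j, Real.exp (o j) :=
    Finset.sum_pos (fun j _ => Real.exp_pos _) ⟨k, Finset.mem_univ k⟩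
  have hsum (t : ℝ) : ∑ j, (t * Real.exp (o j) + 1) = t * ∑ j, Real.exp (o j) + K := by
    simp [Finset.sum_add_distrib, Finset.mul_sum]
  have hsplit : (fun t : ℝ =>
        (1 / (∑ j, (t * Real.exp (o j) + 1)) -
            y k / (t * Real.exp (o k) + 1)) * ((t * Real.exp (o k) + 1) - 1)) =
      fun t => t * Real.exp (o k) / (t * ∑ j, Real.exp (o j) + K) -
        y k * (t * Real.exp (o k) / (t * Real.exp (o k) + 1)) := by
    funext t
    rw [hsum]
    ring
  rw [hsplit]
  have h := (tendsto_mul_div_mul_add_atTop (Real.exp (o k)) K hsum_pos.ne').sub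
    ((tendsto_mul_div_mul_add_atTop (Real.exp (o k)) 1 (Real.exp_pos (o k)).ne').const_mul (y k))
  rwa [div_self (Real.exp_pos (o k)).ne', mul_one] at h

/-- High-evidence limit of the exponential-activation evidential model:
with `α k (t) = t * exp (o k) + 1` and `S t = ∑ j, α j (t)`, the gradient
`(1/S t - y k / α k t) * (α k t - 1)` tends, as `t → ∞`, to the standard
softmax cross-entropy gradient `exp (o k) / ∑ j, exp (o j) - y k`. -/
theorem typeII_exp_gradient_high_evidence_limit {K : ℕ} (hK : 1 ≤ K)
    (o y : Fin K → ℝ) (hy01 : ∀ j, y j = 0 ∨ y j = 1) (hy1 : ∑ j, y j = 1)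
    (k : Fin K) :
    Filter.Tendsto
      (fun t : ℝ =>
        (1 / (∑ j, (t * Real.exp (o j) + 1)) -
            y k / (t * Real.exp (o k) + 1)) * ((t * Real.exp (o k) + 1) - 1))
      Filter.atTop
      (nhds (Real.exp (o k) / (∑ j, Real.exp (o j)) - y k)) :=
  typeII_exp_gradient_high_evidence_limit_general o y k
end
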